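/- Let a₀ be a non-negative integer and a₁, …, a_μ (μ ≥ 1) positive integers with g = gcd(a₁, …, a_μ). Then every integer D satisfying D ≡ a₀ (mod g) and D ≥ a₀ + g · (min_α(a_α/g) − 1) · (max_α(a_α/g) − 1) belongs to the affine cone con(a₀; a₁, …, a_μ) = { a₀ + Σ_α n_α · a_α | n_α ∈ ℕ₀ }. -/
import Mathlib

section Aux

/-- Bezout for finite families of naturals. -/
lemma finset_gcd_bezout {ι : Type*} [DecidableEq ι] (b : ι → ℕ) (s : Finset ι) :
    ∃ c : ι → ℤ, ((s.gcd b : ℕ) : ℤ) = ∑ α ∈ s, c α * (b α : ℤ) := by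
  induction s using Finset.induction_on with
  | empty => exact ⟨0, by simp⟩
  | @insert a s ha ih =>
    obtain ⟨c, hc⟩ := ih
    set A := Nat.gcdA (b a) (s.gcd b) with hA
    set B := Nat.gcdB (b a) (s.gcd b) with hB
    refine ⟨fun α => if α = a then A else B * c α, ?_⟩
    rw [Finset.sum_insert ha]
    beta_reduce
    rw [if_pos rfl]
    have hrest : ∑ α ∈ s, (if α = a then A else B * c α) * (b α : ℤ)
        = B * ∑ α ∈ s, c α * (b α : ℤ) := by
      rw [Finset.mul_sum]
      refine Finset.sum_congr rfl fun α hα => ?_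
      rw [if_neg (by rintro rfl; exact ha hα)]; ring
    rw [hrest, ← hc]
    have h1 : ((Finset.gcd (insert a s) b : ℕ) : ℤ) = ((Nat.gcd (b a) (s.gcd b) : ℕ) : ℤ) := by
      rw [Finset.gcd_insert]; rfl
    rw [h1, Nat.gcd_eq_gcd_ab (b a) (s.gcd b)]
    ring

variable {μ : ℕ}

/-- sums of at most k generators mod m -/
def chainS (m : ℕ) (b : Fin μ → ℕ) : ℕ → Finset (ZMod m)
  | 0 => {0}
  | k+1 => chainS m b k ∪ Finset.univ.biUnion fun α => (chainS m b k).image (· + (b α : ZMod m))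

lemma chainS_mono (m : ℕ) (b : Fin μ → ℕ) (k : ℕ) : chainS m b k ⊆ chainS m b (k+1) := by
  rw [chainS]; exact Finset.subset_union_left

lemma chainS_stab (m : ℕ) (b : Fin μ → ℕ) (k : ℕ) (h : chainS m b k = chainS m b (k+1)) :
    chainS m b (k+1) = chainS m b (k+2) := by
  have e1 : chainS m b (k+1)
      = chainS m b k ∪ Finset.univ.biUnion fun α => (chainS m b k).image (· + (b α : ZMod m)) := by
    rw [chainS]
  have e2 : chainS m b (k+2)
      = chainS m b (k+1) ∪ Finset.univ.biUnion fun α => (chainS m b (k+1)).image (· + (b α : ZMod m)) := by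
    rw [chainS]
  rw [e2, ← h, ← e1]
  exact h

lemma chainS_card (m : ℕ) (b : Fin μ → ℕ) :
    ∀ k, chainS m b k = chainS m b (k+1) ∨ k + 2 ≤ (chainS m b (k+1)).card := by
  intro k
  induction k with
  | zero =>
    by_cases h : chainS m b 0 = chainS m b 1
    · exact Or.inl h
    · right
      have h1 : (chainS m b 0).card = 1 := rfl
      have := Finset.card_lt_card (ssubset_of_subset_of_ne (chainS_mono m b 0) h)
      omega
  | succ k ih =>
    rcases ih with h | h
    · exact Or.inl (chainS_stab m b k h)
    · by_cases h2 : chainS m b (k+1) = chainS m b (k+2)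
      · exact Or.inl h2
      · right
        have := Finset.card_lt_card (ssubset_of_subset_of_ne (chainS_mono m b (k+1)) h2)
        omega

lemma chainS_rep (m : ℕ) (b : Fin μ → ℕ) (k : ℕ) :
    ∀ x ∈ chainS m b k, ∃ f : Fin μ → ℕ, (∑ α, f α) ≤ k ∧ ((∑ α, f α * b α : ℕ) : ZMod m) = x := by
  induction k with
  | zero =>
    intro x hx
    rw [chainS, Finset.mem_singleton] at hx
    exact ⟨0, by simp, by simp [hx]⟩
  | succ k ih =>
    intro x hx
    rw [chainS, Finset.mem_union] at hx
    rcases hx with hx | hx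
    · obtain ⟨f, hf1, hf2⟩ := ih x hx
      exact ⟨f, le_trans hf1 (Nat.le_succ k), hf2⟩
    · rw [Finset.mem_biUnion] at hx
      obtain ⟨α, -, hx⟩ := hx
      rw [Finset.mem_image] at hx
      obtain ⟨y, hy, rfl⟩ := hx
      obtain ⟨f, hf1, hf2⟩ := ih y hy
      refine ⟨fun β => f β + if β = α then 1 else 0, ?_, ?_⟩
      · rw [Finset.sum_add_distrib, Finset.sum_ite_eq' Finset.univ α (fun _ => 1)]
        simp only [Finset.mem_univ, if_pos]
        omega
      · have : ∑ β, (f β + if β = α then 1 else 0) * b β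
            = (∑ β, f β * b β) + b α := by
          rw [Finset.sum_congr rfl (fun β _ => add_mul (f β) _ (b β)),
            Finset.sum_add_distrib]
          congr 1
          rw [Finset.sum_congr rfl (fun β _ => by
            rw [ite_mul, one_mul, zero_mul]), Finset.sum_ite_eq' Finset.univ α b]
          simp
        rw [this, Nat.cast_add, hf2]

lemma chainS_zero_mem (m : ℕ) (b : Fin μ → ℕ) (k : ℕ) : (0 : ZMod m) ∈ chainS m b k := by
  induction k with
  | zero => simp [chainS]
  | succ k ih => exact chainS_mono m b k ih

/-- Every residue mod `m` is a sum of at most `m - 1` generators, if gcd of generators is 1. -/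
lemma residue_lemma (m : ℕ) (hm : 0 < m) (b : Fin μ → ℕ)
    (hg : Finset.univ.gcd b = 1) (N : ℕ) :
    ∃ f : Fin μ → ℕ, (∑ α, f α) ≤ m - 1 ∧ (∑ α, f α * b α) ≡ N [MOD m] := by
  haveI : NeZero m := ⟨hm.ne'⟩
  -- the chain stabilizes at m - 1
  set T := chainS m b (m-1) with hT
  have hstab : chainS m b (m-1) = chainS m b m := by
    have hm' : m - 1 + 1 = m := by omega
    rcases chainS_card m b (m-1) with h | h
    · rwa [hm'] at h
    · exfalso
      have hcard := Finset.card_le_univ (chainS m b (m-1+1))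
      rw [ZMod.card m] at hcard
      omega
  have hclosed : ∀ x ∈ T, ∀ α : Fin μ, x + (b α : ZMod m) ∈ T := by
    intro x hx α
    have : x + (b α : ZMod m) ∈ chainS m b (m-1+1) := by
      rw [chainS, Finset.mem_union, Finset.mem_biUnion]
      exact Or.inr ⟨α, Finset.mem_univ α, Finset.mem_image_of_mem _ hx⟩
    have hm' : m - 1 + 1 = m := by omega
    rw [hm'] at this
    rwa [← hstab] at this
  -- closed under adding j * b α
  have hclosed2 : ∀ (j : ℕ) (α : Fin μ), ∀ x ∈ T, x + (j : ZMod m) * (b α : ZMod m) ∈ T := by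
    intro j α
    induction j with
    | zero => intro x hx; simpa using hx
    | succ j ih =>
      intro x hx
      have := hclosed _ (ih x hx) α
      convert this using 1
      push_cast
      ring
  -- closed under adding ∑ n α * b α
  have hclosed3 : ∀ (n : Fin μ → ℕ) (s : Finset (Fin μ)), ∀ x ∈ T,
      x + ∑ α ∈ s, (n α : ZMod m) * (b α : ZMod m) ∈ T := by
    intro n s
    induction s using Finset.induction_on with
    | empty => intro x hx; simpa using hx
    | @insert a s ha ih =>
      intro x hx
      rw [Finset.sum_insert ha]
      have := hclosed2 (n a) a _ (ih x hx)
      convert this using 1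
      ring
  -- Bezout: express (N : ZMod m) as natural combination
  obtain ⟨c, hc⟩ := finset_gcd_bezout b (Finset.univ : Finset (Fin μ))
  rw [hg] at hc
  have hone : (1 : ZMod m) = ∑ α, (c α : ZMod m) * (b α : ZMod m) := by
    have := congrArg (fun z : ℤ => (z : ZMod m)) hc
    push_cast at this
    simpa using this
  have hNmem : (N : ZMod m) ∈ T := by
    have key : (N : ZMod m) = 0 + ∑ α, ((((N : ℤ) * c α) % m).toNat : ZMod m) * (b α : ZMod m) := by
      have hcast : ∀ α : Fin μ, ((((N : ℤ) * c α) % m).toNat : ZMod m)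
          = ((N : ZMod m)) * (c α : ZMod m) := by
        intro α
        have h0 : (0:ℤ) ≤ ((N : ℤ) * c α) % m := Int.emod_nonneg _ (by exact_mod_cast hm.ne')
        have h1 : ((((N : ℤ) * c α) % m).toNat : ℤ) = ((N : ℤ) * c α) % m :=
          Int.toNat_of_nonneg h0
        calc ((((N : ℤ) * c α) % m).toNat : ZMod m)
            = (((((N : ℤ) * c α) % m).toNat : ℤ) : ZMod m) := by push_cast; ring
          _ = ((((N : ℤ) * c α) % ((m:ℕ):ℤ) : ℤ) : ZMod m) := by rw [h1]
          _ = (((N : ℤ) * c α : ℤ) : ZMod m) := ZMod.intCast_mod _ _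
          _ = (N : ZMod m) * (c α : ZMod m) := by push_cast; ring
      rw [zero_add, Finset.sum_congr rfl (fun α _ => by rw [hcast α])]
      rw [show ∑ α, (N : ZMod m) * (c α : ZMod m) * (b α : ZMod m)
          = (N : ZMod m) * ∑ α, (c α : ZMod m) * (b α : ZMod m) from by
        rw [Finset.mul_sum]; exact Finset.sum_congr rfl fun α _ => by ring]
      rw [← hone, mul_one]
    rw [key]
    exact hclosed3 _ _ _ (chainS_zero_mem m b (m-1))
  obtain ⟨f, hf1, hf2⟩ := chainS_rep m b (m-1) _ hNmem
  exact ⟨f, hf1, (ZMod.natCast_eq_natCast_iff _ _ _).mp hf2⟩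

end Aux

/-- Every `D ≡ a₀ (mod g)` with `D ≥ a₀ + g·(min(a/g)−1)·(max(a/g)−1)` belongs to
the affine cone `con(a₀; a₁, …, a_μ)`, where `g = gcd(a₁, …, a_μ)`. -/
theorem stmt_7 (a₀ : ℕ) (μ : ℕ) (hμ : 1 ≤ μ) (a : Fin μ → ℕ) (ha : ∀ α, 0 < a α)
    (m M : ℕ)
    (hm : IsLeast (Set.range fun α => a α / Finset.univ.gcd a) m)
    (hM : IsGreatest (Set.range fun α => a α / Finset.univ.gcd a) M)
    (D : ℕ) (hmod : D ≡ a₀ [MOD Finset.univ.gcd a])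
    (hD : a₀ + Finset.univ.gcd a * ((m - 1) * (M - 1)) ≤ D) :
    ∃ n : Fin μ → ℕ, D = a₀ + ∑ α, n α * a α := by
  set g := Finset.univ.gcd a with hgdef
  have hα0 : Nonempty (Fin μ) := ⟨⟨0, hμ⟩⟩
  have hg : 0 < g := by
    rcases Nat.eq_zero_or_pos g with h | h
    · exfalso
      have := Finset.gcd_eq_zero_iff.mp h (Classical.arbitrary (Fin μ)) (Finset.mem_univ _)
      exact absurd this (ha _).ne'
    · exact h
  set b : Fin μ → ℕ := fun α => a α / g with hbdef
  have hab : ∀ α, a α = g * b α := by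
    intro α
    exact (Nat.mul_div_cancel' (Finset.gcd_dvd (Finset.mem_univ α))).symm
  have hbpos : ∀ α, 0 < b α := by
    intro α
    have := ha α
    rw [hab α] at this
    exact Nat.pos_of_mul_pos_left (by rwa [mul_comm] at this)
  have hgb : Finset.univ.gcd b = 1 :=
    Finset.gcd_div_eq_one (Finset.mem_univ (Classical.arbitrary (Fin μ)))
      (ha (Classical.arbitrary (Fin μ))).ne'
  -- m and M facts
  obtain ⟨αm, hαm⟩ := hm.1
  have hmle : ∀ α, m ≤ b α := fun α => hm.2 ⟨α, rfl⟩
  have hMge : ∀ α, b α ≤ M := fun α => hM.2 ⟨α, rfl⟩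
  have hm1 : 0 < m := hαm ▸ hbpos αm
  have hM1 : 0 < M := lt_of_lt_of_le hm1 (le_trans (hmle αm) (hMge αm))
  -- reduce to N
  have ha₀D : a₀ ≤ D := le_trans (Nat.le_add_right _ _) hD
  have hdvd : g ∣ D - a₀ := (Nat.modEq_iff_dvd' ha₀D).mp hmod.symm
  obtain ⟨N, hN⟩ := hdvd
  have hDN : D = a₀ + g * N := by omega
  have hNge : (m - 1) * (M - 1) ≤ N := by
    have : g * ((m - 1) * (M - 1)) ≤ g * N := by omega
    exact Nat.le_of_mul_le_mul_left this hg
  -- residue lemma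
  obtain ⟨f, hf1, hf2⟩ := residue_lemma m hm1 b hgb N
  set t := ∑ α, f α * b α with htdef
  set k := ∑ α, f α with hkdef
  have htk : t ≤ k * M := by
    rw [htdef, hkdef, Finset.sum_mul]
    exact Finset.sum_le_sum fun α _ => Nat.mul_le_mul_left (f α) (hMge α)
  have hkM : k * (M - 1) ≤ (m - 1) * (M - 1) :=
    Nat.mul_le_mul_right _ hf1
  have hkMeq : k * (M - 1) + k = k * M := by
    obtain ⟨M', hM'⟩ : ∃ M', M = M' + 1 := ⟨M - 1, by omega⟩
    subst hM'
    simp [Nat.mul_succ]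
  -- t ≤ N
  have htN : t ≤ N := by
    by_contra h
    push_neg at h
    have hdvd2 : m ∣ t - N := (Nat.modEq_iff_dvd' (le_of_lt h)).mp hf2.symm
    have h1 : m ≤ t - N := Nat.le_of_dvd (by omega) hdvd2
    omega
  have hdvd3 : m ∣ N - t := (Nat.modEq_iff_dvd' htN).mp hf2
  obtain ⟨q, hq⟩ := hdvd3
  have hq' : N = t + q * m := by rw [mul_comm] at hq; omega
  -- final witness
  refine ⟨fun β => f β + if β = αm then q else 0, ?_⟩
  have hsum : ∑ β, (f β + if β = αm then q else 0) * a β = g * N := by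
    have : ∀ β, (f β + if β = αm then q else 0) * a β
        = g * (f β * b β) + g * ((if β = αm then q else 0) * b β) := by
      intro β
      rw [hab β]
      ring
    rw [Finset.sum_congr rfl (fun β _ => this β), Finset.sum_add_distrib,
      ← Finset.mul_sum, ← Finset.mul_sum, ← htdef]
    have h2 : ∑ β, (if β = αm then q else 0) * b β = q * m := by
      rw [Finset.sum_congr rfl (fun β _ => by rw [ite_mul, zero_mul]),
        Finset.sum_ite_eq' Finset.univ αm (fun β => q * b β)]
      simp [hαm]
    rw [h2, ← Nat.mul_add]
    congr 1
    omega
  rw [hsum]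
  omega
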